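/- arXiv:1301.7191 — 2 statements merged into one kernel-verified Lean document; each statement's English description precedes it below -/
import Mathlib

section
/- Suppose X satisfies the δ-annular decay property and 0 < α < δ. If u ∈ BMO(X) and 𝓜_α u ≢ ∞, then 𝓜_α u is α-Hölder continuous with ‖𝓜_α u‖_{C^{0,α}} ≤ C ‖u‖_{BMO}. -/
/-!
Fix `x, y` at distance `d` and a radius `r`; it suffices to bound `r^α ⨍_{B(x,r)} |u|` by
`𝓜_α u(y) + C N d^α`. For `r ≫ d` the balls `B(x,r) ⊂ B(y,r+2d) ⊂ B(x,r+3d)` have measures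
in ratio `1 + O((d/r)^δ)` by annular decay. The excess `O((d/r)^δ) s^α ⨍_{B(y,s)} |u|`,
`s = r + 2d`, is absorbed into `𝓜_α u(y)` by also testing the radius `2s` and paying `O(N)` for
passing from `B(y,s)` to `B(y,2s)`; it becomes `O(N d^α)` because `α < δ`. For `r ≲ d`, doubling
`r` up to the scale `d` costs `O(N)` per step, and the number of steps is beaten by the factor
`r^α`. Annular decay also yields the doubling property of `μ`.
-/

open MeasureTheory Metric
open scoped ENNReal

/-- The fractional maximal function `𝓜_α u(x) = sup_{r>0} r^α ⨍_{B(x,r)} |u| dμ`. -/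
noncomputable def frMax {X : Type*} [MetricSpace X] [MeasurableSpace X]
    (μ : Measure X) (α : ℝ) (u : X → ℝ) (x : X) : ℝ :=
  sSup {t : ℝ | ∃ r : ℝ, 0 < r ∧ t = r ^ α * ⨍ y in ball x r, |u y| ∂μ}

open ProbabilityTheory

section Averages

variable {Ω : Type*} [MeasurableSpace Ω]

theorem integral_abs_sub_integral_le {ν : Measure Ω} [IsProbabilityMeasure ν] {f : Ω → ℝ}
    (hf : Integrable f ν) (c : ℝ) :
    ∫ x, |f x - ∫ y, f y ∂ν| ∂ν ≤ 2 * ∫ x, |f x - c| ∂ν := by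
  have hfc : Integrable (fun x => |f x - c|) ν := (hf.sub (integrable_const c)).abs
  have hmean : |∫ y, f y ∂ν - c| ≤ ∫ x, |f x - c| ∂ν := by
    simpa [integral_sub hf (integrable_const c)] using
      abs_integral_le_integral_abs (f := fun x => f x - c) (μ := ν)
  calc ∫ x, |f x - ∫ y, f y ∂ν| ∂ν ≤ ∫ x, (|f x - c| + ∫ y, |f y - c| ∂ν) ∂ν := by
        refine integral_mono (hf.sub (integrable_const _)).abs (hfc.add (integrable_const _))
          fun x => ?_
        calc |f x - ∫ y, f y ∂ν| ≤ |f x - c| + |∫ y, f y ∂ν - c| := by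
              rw [abs_sub_comm (∫ y, f y ∂ν)]; exact abs_sub_le _ _ _
          _ ≤ _ := by gcongr
    _ = 2 * ∫ x, |f x - c| ∂ν := by
        rw [integral_add hfc (integrable_const _), integral_const]; simp; ring

theorem integral_abs_le_integral_abs_add {ν ν' : Measure Ω} [IsProbabilityMeasure ν]
    [IsProbabilityMeasure ν'] {D : ℝ} (hD : 0 ≤ D) (hνν' : ν ≤ ENNReal.ofReal D • ν')
    {u : Ω → ℝ} (hu : Integrable u ν') :
    ∫ x, |u x| ∂ν ≤ ∫ x, |u x| ∂ν' + 2 * D * ∫ x, |u x - ∫ y, u y ∂ν'| ∂ν' := by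
  set c := ∫ x, |u x| ∂ν'
  have huν : Integrable u ν := (hu.smul_measure ENNReal.ofReal_ne_top).mono_measure hνν'
  have hosc : ∫ x, |(|u x| - c)| ∂ν' ≤ 2 * ∫ x, |u x - ∫ y, u y ∂ν'| ∂ν' :=
    (integral_abs_sub_integral_le hu.abs |∫ y, u y ∂ν'|).trans <| by
      gcongr 2 * ?_
      exact integral_mono (hu.abs.sub (integrable_const _)).abs
        (hu.sub (integrable_const _)).abs fun x => abs_abs_sub_abs_le_abs_sub _ _
  have hDν' : Integrable (fun x => |(|u x| - c)|) (ENNReal.ofReal D • ν') :=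
    (hu.abs.sub (integrable_const c)).abs.smul_measure ENNReal.ofReal_ne_top
  have : ∫ x, |u x| ∂ν - c ≤ D * ∫ x, |(|u x| - c)| ∂ν' :=
    calc ∫ x, |u x| ∂ν - c = ∫ x, (|u x| - c) ∂ν := by
          rw [integral_sub huν.abs (integrable_const c), integral_const]; simp
      _ ≤ ∫ x, |(|u x| - c)| ∂ν :=
          integral_mono (huν.abs.sub (integrable_const c)) (huν.abs.sub (integrable_const c)).abs
            fun x => le_abs_self _
      _ ≤ ∫ x, |(|u x| - c)| ∂(ENNReal.ofReal D • ν') :=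
          integral_mono_measure hνν' (ae_of_all _ fun _ => abs_nonneg _) hDν'
      _ = D * ∫ x, |(|u x| - c)| ∂ν' := by
          rw [integral_smul_measure, ENNReal.toReal_ofReal hD, smul_eq_mul]
  nlinarith

variable {μ : Measure Ω} {s t : Set Ω} {E : Type*} [NormedAddCommGroup E]

theorem setAverage_eq_integral_cond [NormedSpace ℝ E] (f : Ω → E) (s : Set Ω) :
    ⨍ x in s, f x ∂μ = ∫ x, f x ∂μ[|s] :=
  setAverage_eq' μ f s

theorem MeasureTheory.IntegrableOn.integrable_cond {f : Ω → E} (hf : IntegrableOn f s μ)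
    (hs : μ s ≠ 0) : Integrable f μ[|s] :=
  hf.smul_measure (ENNReal.inv_ne_top.2 hs)

theorem cond_le_smul_cond (hst : s ⊆ t) (hs : μ s ≠ 0) (ht : μ t ≠ ∞) {D : ℝ≥0∞}
    (hμ : μ t ≤ D * μ s) : μ[|s] ≤ D • μ[|t] := by
  have ht0 : μ t ≠ 0 := (pos_of_ne_zero hs |>.trans_le (measure_mono hst)).ne'
  have hinv : (μ s)⁻¹ ≤ D * (μ t)⁻¹ := by
    rw [← div_eq_mul_inv, ENNReal.le_div_iff_mul_le (Or.inl ht0) (Or.inl ht), mul_comm,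
      ← div_eq_mul_inv, ENNReal.div_le_iff hs (ne_top_of_le_ne_top ht (measure_mono hst))]
    exact hμ
  refine Measure.le_iff.2 fun A hA => ?_
  rw [Measure.smul_apply, cond_apply' hA, cond_apply' hA, smul_eq_mul, ← mul_assoc]
  gcongr

theorem setAverage_le_mul_setAverage (hst : s ⊆ t) (hs : μ s ≠ 0) (ht : μ t ≠ ∞) {D : ℝ}
    (hD : 0 ≤ D) (hμ : μ t ≤ ENNReal.ofReal D * μ s) {g : Ω → ℝ} (hg : IntegrableOn g t μ)
    (hg0 : 0 ≤ g) : ⨍ x in s, g x ∂μ ≤ D * ⨍ x in t, g x ∂μ := by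
  have ht0 : μ t ≠ 0 := (pos_of_ne_zero hs |>.trans_le (measure_mono hst)).ne'
  rw [setAverage_eq_integral_cond, setAverage_eq_integral_cond, ← ENNReal.toReal_ofReal hD,
    ← smul_eq_mul, ← integral_smul_measure]
  exact integral_mono_measure (cond_le_smul_cond hst hs ht hμ) (ae_of_all _ hg0)
    ((hg.integrable_cond ht0).smul_measure ENNReal.ofReal_ne_top)

end Averages

section Balls

variable {X : Type*} [MetricSpace X] [MeasurableSpace X] {μ : Measure X}

def PosFiniteBalls (μ : Measure X) : Prop :=
  ∀ (z : X) (s : ℝ), 0 < s → 0 < μ (ball z s) ∧ μ (ball z s) < ∞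

def IsDoublingWith (μ : Measure X) (D : ℝ) : Prop :=
  ∀ (z : X) (s : ℝ), 0 < s → μ (ball z (2 * s)) ≤ ENNReal.ofReal D * μ (ball z s)

def HasAnnularDecay (μ : Measure X) (δ K : ℝ) : Prop :=
  ∀ (z : X) (R h : ℝ), 0 < R → 0 < h → h < R →
    μ (ball z R \ ball z (R - h)) ≤ ENNReal.ofReal (K * (h / R) ^ δ) * μ (ball z R)

def IsBMOWith (μ : Measure X) (u : X → ℝ) (N : ℝ) : Prop :=
  (∀ (z : X) (s : ℝ), 0 < s → IntegrableOn u (ball z s) μ) ∧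
    ∀ (z : X) (s : ℝ), 0 < s → ⨍ w in ball z s, |u w - ⨍ v in ball z s, u v ∂μ| ∂μ ≤ N

noncomputable def avgAbs (μ : Measure X) (u : X → ℝ) (x : X) (r : ℝ) : ℝ :=
  ⨍ y in ball x r, |u y| ∂μ

theorem avgAbs_nonneg {u : X → ℝ} {x : X} {r : ℝ} : 0 ≤ avgAbs μ u x r :=
  (setAverage_eq_integral_cond _ _).trans_ge (integral_nonneg fun _ => abs_nonneg _)

theorem avgAbs_le_avgAbs_add {u : X → ℝ} {N D : ℝ} (hμ : PosFiniteBalls μ) (hu : IsBMOWith μ u N)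
    (hD : 0 ≤ D) {z₁ z₂ : X} {s₁ s₂ : ℝ} (hs₁ : 0 < s₁) (hs₂ : 0 < s₂)
    (hsub : ball z₁ s₁ ⊆ ball z₂ s₂)
    (hμ₁₂ : μ (ball z₂ s₂) ≤ ENNReal.ofReal D * μ (ball z₁ s₁)) :
    avgAbs μ u z₁ s₁ ≤ avgAbs μ u z₂ s₂ + 2 * D * N := by
  have := cond_isProbabilityMeasure_of_finite (hμ z₁ s₁ hs₁).1.ne' (hμ z₁ s₁ hs₁).2.ne
  have := cond_isProbabilityMeasure_of_finite (hμ z₂ s₂ hs₂).1.ne' (hμ z₂ s₂ hs₂).2.ne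
  have hcmp := integral_abs_le_integral_abs_add hD
    (cond_le_smul_cond hsub (hμ z₁ s₁ hs₁).1.ne' (hμ z₂ s₂ hs₂).2.ne hμ₁₂)
    ((hu.1 z₂ s₂ hs₂).integrable_cond (hμ z₂ s₂ hs₂).1.ne')
  have hosc := hu.2 z₂ s₂ hs₂
  simp only [setAverage_eq_integral_cond] at hosc
  simp only [avgAbs, setAverage_eq_integral_cond]
  nlinarith

theorem avgAbs_le_avgAbs_two_pow_mul_add {u : X → ℝ} {N D : ℝ} (hμ : PosFiniteBalls μ)
    (hu : IsBMOWith μ u N) (hD : 0 ≤ D) (hdoub : IsDoublingWith μ D) (z : X) {ρ : ℝ}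
    (hρ : 0 < ρ) (k : ℕ) :
    avgAbs μ u z ρ ≤ avgAbs μ u z (2 ^ k * ρ) + 2 * D * N * k := by
  induction k with
  | zero => simp
  | succ k ih =>
    have hρk : 0 < 2 ^ k * ρ := by positivity
    have hdoub_k := hdoub z _ hρk
    rw [← mul_assoc, ← pow_succ'] at hdoub_k
    have hstep := avgAbs_le_avgAbs_add hμ hu hD hρk (by positivity)
      (ball_subset_ball (by rw [pow_succ]; nlinarith)) hdoub_k
    push_cast
    linarith

theorem HasAnnularDecay.measure_ball_le {δ K : ℝ} (hann : HasAnnularDecay μ δ K) {z : X}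
    {R h θ : ℝ} (hR : 0 < R) (hh : 0 < h) (hhR : h < R) (hfin : μ (ball z R) ≠ ∞)
    (hθ : K * (h / R) ^ δ ≤ θ) (hθ0 : 0 ≤ θ) (hθ1 : θ ≤ 1 / 2) :
    μ (ball z R) ≤ ENNReal.ofReal (1 + 2 * θ) * μ (ball z (R - h)) := by
  have hsub : ball z (R - h) ⊆ ball z R := ball_subset_ball (by linarith)
  have hfin' : μ (ball z (R - h)) ≠ ∞ := ne_top_of_le_ne_top hfin (measure_mono hsub)
  have hsplit : μ (ball z R) ≤ μ (ball z (R - h)) + ENNReal.ofReal θ * μ (ball z R) :=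
    calc μ (ball z R) ≤ μ (ball z (R - h)) + μ (ball z R \ ball z (R - h)) := by
          simpa [Set.union_sdiff_cancel hsub] using
            measure_union_le (μ := μ) (ball z (R - h)) (ball z R \ ball z (R - h))
      _ ≤ μ (ball z (R - h)) + ENNReal.ofReal θ * μ (ball z R) := by
          gcongr
          exact (hann z R h hR hh hhR).trans (by gcongr)
  have hreal := ENNReal.toReal_mono (by finiteness) hsplit
  rw [ENNReal.toReal_add hfin' (by finiteness), ENNReal.toReal_mul,
    ENNReal.toReal_ofReal hθ0] at hreal
  rw [← ENNReal.ofReal_toReal hfin, ← ENNReal.ofReal_toReal hfin',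
    ← ENNReal.ofReal_mul (by linarith)]
  gcongr
  nlinarith [mul_nonneg (mul_nonneg hθ0 (by linarith : 0 ≤ 1 - 2 * θ))
    (ENNReal.toReal_nonneg (a := μ (ball z R)))]

theorem exists_pos_forall_mul_rpow_le (K : ℝ) {δ τ : ℝ} (hδ : 0 < δ) (hτ : 0 < τ) :
    ∃ η > 0, ∀ t, 0 ≤ t → t ≤ η → K * t ^ δ ≤ τ := by
  have hlim : Filter.Tendsto (fun t : ℝ => K * t ^ δ) (nhds 0) (nhds 0) := by
    simpa [Real.zero_rpow hδ.ne'] using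
      ((Real.continuousAt_rpow_const 0 δ (Or.inr hδ.le)).tendsto).const_mul K
  obtain ⟨ε, hε, hsmall⟩ := Metric.eventually_nhds_iff.1 (hlim.eventually (gt_mem_nhds hτ))
  refine ⟨ε / 2, half_pos hε, fun t ht0 htη => (hsmall ?_).le⟩
  rw [Real.dist_eq, sub_zero, abs_of_nonneg ht0]
  linarith

theorem HasAnnularDecay.exists_isDoublingWith {δ K : ℝ} (hμ : PosFiniteBalls μ)
    (hann : HasAnnularDecay μ δ K) (hδ : 0 < δ) : ∃ D > 0, IsDoublingWith μ D := by
  obtain ⟨η, hη0, hη⟩ := exists_pos_forall_mul_rpow_le K hδ (by norm_num : (0 : ℝ) < 1 / 2)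
  set ε := min η (1 / 2)
  have hε0 : 0 < ε := lt_min hη0 (by norm_num)
  have hε1 : ε ≤ 1 / 2 := min_le_right _ _
  have hε1' : 0 < 1 - ε := by linarith
  have hstep : ∀ z R, 0 < R → μ (ball z R) ≤ 2 * μ (ball z ((1 - ε) * R)) := by
    intro z R hR
    have := hann.measure_ball_le hR (mul_pos hε0 hR) (by nlinarith) (hμ z R hR).2.ne
      (by rw [mul_div_cancel_right₀ _ hR.ne']; exact hη ε hε0.le (min_le_left _ _))
      (by norm_num) le_rfl
    convert this using 3 <;> norm_num [sub_mul]
  have hiter : ∀ (n : ℕ) z R, 0 < R → μ (ball z R) ≤ 2 ^ n * μ (ball z ((1 - ε) ^ n * R)) := by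
    intro n
    induction n with
    | zero => simp
    | succ n ih =>
      intro z R hR
      calc μ (ball z R) ≤ 2 ^ n * μ (ball z ((1 - ε) ^ n * R)) := ih z R hR
        _ ≤ 2 ^ n * (2 * μ (ball z ((1 - ε) * ((1 - ε) ^ n * R)))) := by
            gcongr
            exact hstep z _ (by positivity)
        _ = 2 ^ (n + 1) * μ (ball z ((1 - ε) ^ (n + 1) * R)) := by ring_nf
  obtain ⟨n, hn⟩ := exists_pow_lt_of_lt_one (by norm_num : (0 : ℝ) < 1 / 2)
    (by linarith : 1 - ε < 1)
  refine ⟨2 ^ n, by positivity, fun z s hs => ?_⟩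
  calc μ (ball z (2 * s)) ≤ 2 ^ n * μ (ball z ((1 - ε) ^ n * (2 * s))) :=
        hiter n z _ (by positivity)
    _ ≤ 2 ^ n * μ (ball z s) := by
        gcongr
        nlinarith
    _ = ENNReal.ofReal (2 ^ n) * μ (ball z s) := by rw [ENNReal.ofReal_pow (by norm_num)]; norm_num

end Balls

section FractionalMaximal

variable {X : Type*} [MetricSpace X] [MeasurableSpace X] {μ : Measure X} {α : ℝ} {u : X → ℝ}

theorem rpow_mul_avgAbs_le_frMax {x : X}
    (hbdd : BddAbove {t : ℝ | ∃ r : ℝ, 0 < r ∧ t = r ^ α * ⨍ y in ball x r, |u y| ∂μ})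
    {r : ℝ} (hr : 0 < r) : r ^ α * avgAbs μ u x r ≤ frMax μ α u x :=
  le_csSup hbdd ⟨r, hr, rfl⟩

theorem frMax_le {x : X} {c : ℝ} (h : ∀ r, 0 < r → r ^ α * avgAbs μ u x r ≤ c) :
    frMax μ α u x ≤ c :=
  csSup_le ⟨_, 1, one_pos, rfl⟩ fun _ ⟨r, hr, ht⟩ => ht ▸ h r hr

theorem avgAbs_le_one_add_mul_avgAbs {δ K : ℝ} (hμ : PosFiniteBalls μ)
    (hann : HasAnnularDecay μ δ K) (hK : 0 ≤ K) (hδ : 0 < δ)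
    (hu : ∀ (z : X) (s : ℝ), 0 < s → IntegrableOn u (ball z s) μ) {x y : X} {r : ℝ}
    (hr : 0 < r) (hxy : 0 < dist x y) (hθ : K * (3 * dist x y / r) ^ δ ≤ 1 / 2) :
    avgAbs μ u x r ≤ (1 + 2 * (K * (3 * dist x y / r) ^ δ)) * avgAbs μ u y (r + 2 * dist x y) := by
  set d := dist x y
  have hs : 0 < r + 2 * d := by positivity
  have hxs : ball x r ⊆ ball y (r + 2 * d) := fun w hw => by
    rw [mem_ball] at hw ⊢
    linarith [dist_triangle w x y]
  have hsx : ball y (r + 2 * d) ⊆ ball x (r + 3 * d) := fun w hw => by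
    rw [mem_ball] at hw ⊢
    linarith [dist_triangle w y x, dist_comm x y]
  have hratio : μ (ball y (r + 2 * d)) ≤
      ENNReal.ofReal (1 + 2 * (K * (3 * d / r) ^ δ)) * μ (ball x r) := by
    refine (measure_mono hsx).trans ?_
    have := hann.measure_ball_le (z := x) (by positivity) (by positivity)
      (by linarith : 3 * d < r + 3 * d) (hμ x _ (by positivity)).2.ne ?_ (by positivity) hθ
    · rwa [add_sub_cancel_right] at this
    · gcongr
      linarith
  exact setAverage_le_mul_setAverage hxs (hμ x r hr).1.ne' (hμ y _ hs).2.ne (by positivity)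
    hratio (hu y _ hs).abs fun _ => abs_nonneg _

/-- Absorption: `2s` is also an admissible radius and `(2s)^α = 2^α s^α` with `2^α > 1`, so
`2θ s^α ⨍_{B(y,s)} |u|` is absorbed into `𝓜_α u(y)` at the cost of the BMO comparison of
`B(y,s)` with `B(y,2s)`. -/
theorem one_add_mul_rpow_mul_avgAbs_le_frMax_add {N D : ℝ} (hμ : PosFiniteBalls μ)
    (hu : IsBMOWith μ u N) (hD : 0 ≤ D) (hdoub : IsDoublingWith μ D) (hα : 0 < α) {y : X}
    (hbdd : BddAbove {t : ℝ | ∃ r : ℝ, 0 < r ∧ t = r ^ α * ⨍ z in ball y r, |u z| ∂μ})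
    {s θ : ℝ} (hs : 0 < s) (hθ0 : 0 ≤ θ) (hθ : 2 * θ ≤ 2 ^ α - 1) :
    (1 + 2 * θ) * (s ^ α * avgAbs μ u y s) ≤
      frMax μ α u y + 4 * 2 ^ α * D * N / (2 ^ α - 1) * θ * s ^ α := by
  set p : ℝ := 2 ^ α
  set a := s ^ α * avgAbs μ u y s
  set M := frMax μ α u y
  have hp : 0 < p - 1 := sub_pos.2 (Real.one_lt_rpow (by norm_num) hα)
  have ha : a ≤ M := rpow_mul_avgAbs_le_frMax hbdd hs
  have hpa : p * a ≤ M + 2 * p * D * N * s ^ α := by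
    have hdbl := avgAbs_le_avgAbs_add hμ hu hD hs (by positivity)
      (ball_subset_ball (by linarith)) (hdoub y s hs)
    have h2s := rpow_mul_avgAbs_le_frMax hbdd (by positivity : 0 < 2 * s)
    rw [Real.mul_rpow zero_le_two hs.le] at h2s
    have := mul_le_mul_of_nonneg_left hdbl (by positivity : 0 ≤ p * s ^ α)
    linarith
  set l := 2 * θ / (p - 1)
  have hl0 : 0 ≤ l := by positivity
  have hl1 : l ≤ 1 := (div_le_one hp).2 hθ
  have hθl : 2 * θ = l * (p - 1) := (div_mul_cancel₀ _ hp.ne').symm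
  calc (1 + 2 * θ) * a = (1 - l) * a + l * (p * a) := by rw [hθl]; ring
    _ ≤ (1 - l) * M + l * (M + 2 * p * D * N * s ^ α) := by gcongr
    _ = M + 4 * p * D * N / (p - 1) * θ * s ^ α := by simp only [l]; field_simp; ring

theorem rpow_mul_avgAbs_le_frMax_add_of_large {δ K N D : ℝ} (hμ : PosFiniteBalls μ)
    (hann : HasAnnularDecay μ δ K) (hK : 0 ≤ K) (hδ : 0 < δ) (hu : IsBMOWith μ u N)
    (hN : 0 ≤ N) (hD : 0 ≤ D) (hdoub : IsDoublingWith μ D) (hα : 0 < α) (hαδ : α ≤ δ)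
    {x y : X} (hbdd : BddAbove {t : ℝ | ∃ r : ℝ, 0 < r ∧ t = r ^ α * ⨍ z in ball y r, |u z| ∂μ})
    {r : ℝ} (hxy : 0 < dist x y) (hdr : 2 * dist x y ≤ r)
    (hθ : K * (3 * dist x y / r) ^ δ ≤ min (1 / 2) ((2 ^ α - 1) / 2)) :
    r ^ α * avgAbs μ u x r ≤
      frMax μ α u y + 4 * 2 ^ α * D * N / (2 ^ α - 1) * (K * 3 ^ δ) * (2 * dist x y) ^ α := by
  set d := dist x y
  set θ := K * (3 * d / r) ^ δ
  set s := r + 2 * d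
  have hr : 0 < r := by linarith
  have hθ0 : 0 ≤ θ := by positivity
  have hp : 0 < (2 : ℝ) ^ α - 1 := sub_pos.2 (Real.one_lt_rpow (by norm_num) hα)
  have hθs : θ * s ^ α ≤ K * 3 ^ δ * (2 * d) ^ α := by
    have hdr1 : d / r ≤ 1 := (div_le_one hr).2 (by linarith)
    calc θ * s ^ α = K * 3 ^ δ * ((d / r) ^ δ * s ^ α) := by
          simp only [θ]; rw [mul_div_assoc, Real.mul_rpow (by norm_num) (by positivity)]; ring
      _ ≤ K * 3 ^ δ * ((d / r) ^ α * (2 * r) ^ α) := by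
          have h1 : (d / r) ^ δ ≤ (d / r) ^ α :=
            Real.rpow_le_rpow_of_exponent_ge (by positivity) hdr1 hαδ
          have h2 : s ^ α ≤ (2 * r) ^ α :=
            Real.rpow_le_rpow (by positivity) (by simp only [s]; linarith) hα.le
          exact mul_le_mul_of_nonneg_left (mul_le_mul h1 h2 (by positivity) (by positivity))
            (by positivity)
      _ = K * 3 ^ δ * (2 * d) ^ α := by
          rw [← Real.mul_rpow (by positivity) (by positivity)]
          field_simp
  calc r ^ α * avgAbs μ u x r
      ≤ s ^ α * ((1 + 2 * θ) * avgAbs μ u y s) := by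
        gcongr
        · exact avgAbs_nonneg
        · linarith
        · exact avgAbs_le_one_add_mul_avgAbs hμ hann hK hδ hu.1 hr hxy (hθ.trans (min_le_left _ _))
    _ = (1 + 2 * θ) * (s ^ α * avgAbs μ u y s) := by ring
    _ ≤ frMax μ α u y + 4 * 2 ^ α * D * N / (2 ^ α - 1) * θ * s ^ α :=
        one_add_mul_rpow_mul_avgAbs_le_frMax_add hμ hu hD hdoub hα hbdd (by positivity) hθ0
          (by linarith [hθ.trans (min_le_right _ _)])
    _ ≤ _ := by
        have := mul_le_mul_of_nonneg_left hθs
          (by positivity : 0 ≤ 4 * 2 ^ α * D * N / (2 ^ α - 1))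
        linarith

/-- Small radii reduce to large ones: doubling up to the scale `L` costs `2DN` per step, and
the number of steps `k` is paid for by the factor `(2^α)^k` in `R^α = (2^α)^k r^α`. -/
theorem rpow_mul_avgAbs_le_add_of_forall_le {N D : ℝ} (hμ : PosFiniteBalls μ)
    (hu : IsBMOWith μ u N) (hN : 0 ≤ N) (hD : 0 ≤ D) (hdoub : IsDoublingWith μ D) (hα : 0 < α)
    {x : X} {L E : ℝ} (hL : 0 < L) (hlarge : ∀ R, L ≤ R → R ^ α * avgAbs μ u x R ≤ E)
    {r : ℝ} (hr : 0 < r) :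
    r ^ α * avgAbs μ u x r ≤ E + 2 * D * N / (2 ^ α - 1) * (2 * L) ^ α := by
  have hp : 0 < (2 : ℝ) ^ α - 1 := sub_pos.2 (Real.one_lt_rpow (by norm_num) hα)
  rcases le_or_gt L r with hLr | hrL
  · linarith [hlarge r hLr, (by positivity : 0 ≤ 2 * D * N / (2 ^ α - 1) * (2 * L) ^ α)]
  obtain ⟨n, hn, hn'⟩ := exists_nat_pow_near ((one_le_div hr).2 hrL.le) one_lt_two
  rw [le_div_iff₀ hr] at hn
  rw [div_lt_iff₀ hr] at hn'
  set R := 2 ^ (n + 1) * r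
  have hRα : R ^ α = ((2 : ℝ) ^ α) ^ (n + 1) * r ^ α := by
    rw [Real.mul_rpow (by positivity) hr.le, Real.rpow_pow_comm zero_le_two]
  have hsteps : ((n + 1 : ℕ) : ℝ) * r ^ α ≤ (2 * L) ^ α / (2 ^ α - 1) := by
    have hbern := one_add_mul_sub_le_pow (by linarith : (-1 : ℝ) ≤ 2 ^ α) (n + 1)
    have hR : R ^ α ≤ (2 * L) ^ α :=
      Real.rpow_le_rpow (by positivity) (by simp only [R, pow_succ]; linarith) hα.le
    rw [le_div_iff₀ hp]
    nlinarith [Real.rpow_nonneg hr.le α]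
  calc r ^ α * avgAbs μ u x r
      ≤ r ^ α * avgAbs μ u x R + 2 * D * N * (((n + 1 : ℕ) : ℝ) * r ^ α) := by
        have := mul_le_mul_of_nonneg_left
          (avgAbs_le_avgAbs_two_pow_mul_add hμ hu hD hdoub x hr (n + 1)) (Real.rpow_nonneg hr.le α)
        linarith
    _ ≤ R ^ α * avgAbs μ u x R + 2 * D * N * ((2 * L) ^ α / (2 ^ α - 1)) := by
        gcongr
        · exact avgAbs_nonneg
        · exact le_mul_of_one_le_left hr.le (one_le_pow₀ one_le_two)
    _ ≤ E + 2 * D * N / (2 ^ α - 1) * (2 * L) ^ α := by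
        rw [mul_div_assoc', div_mul_eq_mul_div]
        linarith [hlarge R (by simp only [R]; linarith)]

theorem frMax_le_frMax_add_mul_dist_rpow {δ K N D η : ℝ} (hμ : PosFiniteBalls μ)
    (hann : HasAnnularDecay μ δ K) (hK : 0 ≤ K) (hδ : 0 < δ) (hu : IsBMOWith μ u N)
    (hN : 0 ≤ N) (hD : 0 ≤ D) (hdoub : IsDoublingWith μ D) (hα : 0 < α) (hαδ : α ≤ δ)
    (hη : 0 < η) (hηK : ∀ t, 0 ≤ t → t ≤ η → K * t ^ δ ≤ min (1 / 2) ((2 ^ α - 1) / 2))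
    (x : X) {y : X}
    (hbdd : BddAbove {t : ℝ | ∃ r : ℝ, 0 < r ∧ t = r ^ α * ⨍ z in ball y r, |u z| ∂μ}) :
    frMax μ α u x ≤ frMax μ α u y + (4 * 2 ^ α * D / (2 ^ α - 1) * (K * 3 ^ δ) * 2 ^ α
      + 2 * D / (2 ^ α - 1) * (2 * max 2 (3 / η)) ^ α) * N * dist x y ^ α := by
  rcases eq_or_ne x y with rfl | hxy
  · simp [Real.zero_rpow hα.ne']
  set Λ := max 2 (3 / η)
  have hΛ : 2 ≤ Λ := le_max_left _ _
  have hd := dist_pos.2 hxy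
  have hlarge : ∀ R, Λ * dist x y ≤ R → R ^ α * avgAbs μ u x R ≤ frMax μ α u y +
      4 * 2 ^ α * D * N / (2 ^ α - 1) * (K * 3 ^ δ) * (2 * dist x y) ^ α := by
    intro R hR
    have h2 : 2 * dist x y ≤ R := by nlinarith
    have h3 : 3 * dist x y / R ≤ η := by
      have : 3 ≤ η * Λ := (div_le_iff₀' hη).1 (le_max_right _ _)
      rw [div_le_iff₀ (by linarith)]
      nlinarith
    exact rpow_mul_avgAbs_le_frMax_add_of_large hμ hann hK hδ hu hN hD hdoub hα hαδ hbdd hd h2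
      (hηK _ (div_nonneg (by positivity) (by linarith)) h3)
  refine frMax_le fun r hr => (rpow_mul_avgAbs_le_add_of_forall_le hμ hu hN hD hdoub hα
    (by nlinarith) hlarge hr).trans_eq ?_
  rw [Real.mul_rpow zero_le_two hd.le, ← mul_assoc 2 Λ, Real.mul_rpow (by linarith) hd.le]
  ring

end FractionalMaximal

theorem frMax_bmo_to_holder_general
    {X : Type*} [MetricSpace X] [MeasurableSpace X] (μ : Measure X)
    (hball : ∀ (z : X) (s : ℝ), 0 < s → 0 < μ (ball z s) ∧ μ (ball z s) < ∞)
    (δ : ℝ) (hδ0 : 0 < δ)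
    (K : ℝ) (hK : 0 < K)
    (hann : ∀ (z : X) (R h : ℝ), 0 < R → 0 < h → h < R →
      μ (ball z R \ ball z (R - h)) ≤ ENNReal.ofReal (K * (h / R) ^ δ) * μ (ball z R))
    (α : ℝ) (hα0 : 0 < α) (hαδ : α < δ) :
    ∃ C > (0 : ℝ), ∀ (u : X → ℝ) (N : ℝ), 0 ≤ N →
      (∀ (z : X) (s : ℝ), 0 < s → IntegrableOn u (ball z s) μ) →
      (∀ (z : X) (s : ℝ), 0 < s →
        ⨍ w in ball z s, |u w - ⨍ v in ball z s, u v ∂μ| ∂μ ≤ N) →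
      (∀ x : X, BddAbove {t : ℝ | ∃ r : ℝ, 0 < r ∧ t = r ^ α * ⨍ y in ball x r, |u y| ∂μ}) →
      ∀ x y : X, |frMax μ α u x - frMax μ α u y| ≤ C * N * dist x y ^ α := by
  obtain ⟨D, hD, hdoub⟩ := HasAnnularDecay.exists_isDoublingWith hball hann hδ0
  have hp : 0 < (2 : ℝ) ^ α - 1 := sub_pos.2 (Real.one_lt_rpow (by norm_num) hα0)
  obtain ⟨η, hη, hηK⟩ := exists_pos_forall_mul_rpow_le K hδ0
    (lt_min (by norm_num) (by linarith) : (0 : ℝ) < min (1 / 2) ((2 ^ α - 1) / 2))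
  refine ⟨4 * 2 ^ α * D / (2 ^ α - 1) * (K * 3 ^ δ) * 2 ^ α
      + 2 * D / (2 ^ α - 1) * (2 * max 2 (3 / η)) ^ α, by positivity,
    fun u N hN hInt hbmo hbdd x y => abs_sub_le_iff.2 ⟨?_, ?_⟩⟩
  · linarith [frMax_le_frMax_add_mul_dist_rpow hball hann hK.le hδ0 ⟨hInt, hbmo⟩ hN hD.le hdoub
      hα0 hαδ.le hη hηK x (hbdd y)]
  · rw [dist_comm]
    linarith [frMax_le_frMax_add_mul_dist_rpow hball hann hK.le hδ0 ⟨hInt, hbmo⟩ hN hD.le hdoub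
      hα0 hαδ.le hη hηK y (hbdd x)]

/-- Under the δ-annular decay property with `0 < α < δ`, if `u ∈ BMO(X)`
with BMO norm at most `N` and `𝓜_α u` is finite, then `𝓜_α u` is α-Hölder continuous
with `‖𝓜_α u‖_{C^{0,α}} ≤ C ‖u‖_{BMO}`. -/
theorem frMax_bmo_to_holder
    {X : Type*} [MetricSpace X] [MeasurableSpace X] (μ : Measure X)
    (cd : ℝ≥0∞) (hcd : ∀ (z : X) (s : ℝ), 0 < s → μ (ball z (2 * s)) ≤ cd * μ (ball z s))
    (hball : ∀ (z : X) (s : ℝ), 0 < s → 0 < μ (ball z s) ∧ μ (ball z s) < ∞)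
    (δ : ℝ) (hδ0 : 0 < δ) (hδ1 : δ ≤ 1)
    (K : ℝ) (hK : 0 < K)
    (hann : ∀ (z : X) (R h : ℝ), 0 < R → 0 < h → h < R →
      μ (ball z R \ ball z (R - h)) ≤ ENNReal.ofReal (K * (h / R) ^ δ) * μ (ball z R))
    (α : ℝ) (hα0 : 0 < α) (hαδ : α < δ) :
    ∃ C > (0 : ℝ), ∀ (u : X → ℝ) (N : ℝ), 0 ≤ N →
      (∀ (z : X) (s : ℝ), 0 < s → IntegrableOn u (ball z s) μ) →
      (∀ (z : X) (s : ℝ), 0 < s →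
        ⨍ w in ball z s, |u w - ⨍ v in ball z s, u v ∂μ| ∂μ ≤ N) →
      (∀ x : X, BddAbove {t : ℝ | ∃ r : ℝ, 0 < r ∧ t = r ^ α * ⨍ y in ball x r, |u y| ∂μ}) →
      ∀ x y : X, |frMax μ α u x - frMax μ α u y| ≤ C * N * dist x y ^ α :=
  frMax_bmo_to_holder_general μ hball δ hδ0 K hK hann α hα0 hαδ
end

section
/- Let X = (ℝ×{0}) ∪ ({0}×(−∞,1]) ⊂ ℝ² with the sup-metric and 1-dimensional Hausdorff measure μ, and u(x) = x₂ for 0 < x₂ ≤ 1, u = 0 otherwise. Then for 0 ≤ α ≤ 1 and any ball B(z,r) containing the origin: if r ≤ 1/2 then r^α ⨍_{B(z,r)} u dμ ≤ 1/4, and if r > 1/2 then r^α ⨍_{B(z,r)} u dμ ≤ 1/3. -/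
open MeasureTheory Metric
open scoped ENNReal

/-- The cross-shaped set `X = (ℝ×{0}) ∪ ({0}×(−∞,1]) ⊂ ℝ²`, where `ℝ²` carries the
sup-metric (the product metric on `ℝ × ℝ`). -/
def Cross : Set (ℝ × ℝ) := {p | p.2 = 0 ∨ (p.1 = 0 ∧ p.2 ≤ 1)}

/-- The function `u(x) = x₂` if `0 < x₂ ≤ 1`, `u(x) = 0` otherwise. -/
noncomputable def uCross (p : Cross) : ℝ :=
  if 0 < (p : ℝ × ℝ).2 ∧ (p : ℝ × ℝ).2 ≤ 1 then (p : ℝ × ℝ).2 else 0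

open Set

/-!
A ball `B((h, c), r)` containing the origin meets `X` in the horizontal segment
`(h - r, h + r) × {0}` and the vertical segment `{0} × (c - r, min (c + r) 1]`, which overlap
only at the origin. Writing `b = min (c + r) 1`, this gives `μ B = 2r + (b - (c - r)) ≥ 3r` and
`∫_B u ≤ ∫_0^b t dt = b² / 2`. For `r ≤ 1/2` we have `b = c + r ≤ 2r` and `μ B = 4r`, so the
average is at most `r / 2` and `r^α ≤ 1`; for `r > 1/2` the average is at most `1 / (6r)` and
`r^α ≤ max 1 r ≤ 2r`.
-/

theorem Isometry.setIntegral_image_hausdorffMeasure {X Y E : Type*}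
    [EMetricSpace X] [MeasurableSpace X] [BorelSpace X]
    [EMetricSpace Y] [MeasurableSpace Y] [BorelSpace Y]
    [NormedAddCommGroup E] [NormedSpace ℝ E]
    {e : X → Y} (he : Isometry e) (hme : MeasurableEmbedding e) {d : ℝ} (hd : 0 ≤ d)
    (g : Y → E) (s : Set X) :
    ∫ y in e '' s, g y ∂μH[d] = ∫ x in s, g (e x) ∂μH[d] := by
  have hmp : MeasurePreserving e μH[d] (μH[d].restrict (range e)) :=
    ⟨hme.measurable, he.map_hausdorffMeasure (Or.inl hd)⟩
  rw [← hmp.setIntegral_image_emb hme, Measure.restrict_restrict_of_subset (image_subset_range e s)]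

theorem Isometry.hausdorffMeasure_real_image {Y : Type*} [EMetricSpace Y] [MeasurableSpace Y]
    [BorelSpace Y] {e : ℝ → Y} (he : Isometry e) (s : Set ℝ) :
    μH[1] (e '' s) = volume s := by
  rw [he.hausdorffMeasure_image (Or.inl zero_le_one), hausdorffMeasure_real]

theorem Metric.hausdorffMeasure_subtype_ball {X : Type*} [MetricSpace X] [MeasurableSpace X]
    [BorelSpace X] {s : Set X} {d : ℝ} (hd : 0 ≤ d) (z : s) (r : ℝ) :
    μH[d] (ball z r) = μH[d] (ball (z : X) r ∩ s) := by
  rw [← isometry_subtype_coe.hausdorffMeasure_image (Or.inl hd), Subtype.image_ball]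
  rfl

theorem Metric.setIntegral_subtype_ball {X E : Type*} [MetricSpace X] [MeasurableSpace X]
    [BorelSpace X] [NormedAddCommGroup E] [NormedSpace ℝ E] {s : Set X} (hs : MeasurableSet s)
    {d : ℝ} (hd : 0 ≤ d) (z : s) (r : ℝ) (f : X → E) :
    ∫ y in ball z r, f y ∂μH[d] = ∫ x in ball (z : X) r ∩ s, f x ∂μH[d] := by
  rw [← isometry_subtype_coe.setIntegral_image_hausdorffMeasure (.subtype_coe hs) hd,
    Subtype.image_ball]
  rfl

theorem Real.volume_Ioo_inter_Iic (a b c : ℝ) :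
    volume (Ioo a b ∩ Iic c) = ENNReal.ofReal (min b c - a) := by
  apply le_antisymm
  · calc volume (Ioo a b ∩ Iic c) ≤ volume (Ioc a (min b c)) :=
          measure_mono fun t ht => ⟨ht.1.1, le_min ht.1.2.le ht.2⟩
      _ = _ := Real.volume_Ioc
  · calc ENNReal.ofReal (min b c - a) = volume (Ioo a (min b c)) := Real.volume_Ioo.symm
      _ ≤ volume (Ioo a b ∩ Iic c) :=
          measure_mono fun t ht => ⟨⟨ht.1, ht.2.trans_le (min_le_left b c)⟩,
            ht.2.le.trans (min_le_right b c)⟩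

theorem Real.setIntegral_indicator_Ioc_id_le {s : Set ℝ} {b : ℝ} (hb : 0 ≤ b)
    (hs : s ∩ Ioc 0 1 ⊆ Ioc 0 b) :
    ∫ t in s, (Ioc (0 : ℝ) 1).indicator id t ≤ b ^ 2 / 2 := by
  rw [setIntegral_indicator measurableSet_Ioc]
  calc ∫ t in s ∩ Ioc 0 1, id t ≤ ∫ t in Ioc 0 b, t :=
        setIntegral_mono_set continuous_id.integrableOn_Ioc
          ((ae_restrict_iff' measurableSet_Ioc).2 (.of_forall fun t ht => ht.1.le))
          hs.eventuallyLE
    _ = b ^ 2 / 2 := by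
        rw [← intervalIntegral.integral_of_le hb, integral_id]
        ring

namespace Cross

def horizontal (s : ℝ) : ℝ × ℝ := (s, 0)

def vertical (t : ℝ) : ℝ × ℝ := (0, t)

theorem isometry_horizontal : Isometry horizontal :=
  Isometry.of_dist_eq fun a b => by simp [horizontal, Prod.dist_eq]

theorem isometry_vertical : Isometry vertical :=
  Isometry.of_dist_eq fun a b => by simp [vertical, Prod.dist_eq]

theorem measurableEmbedding_horizontal : MeasurableEmbedding horizontal :=
  isometry_horizontal.isClosedEmbedding.measurableEmbedding

theorem measurableEmbedding_vertical : MeasurableEmbedding vertical :=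
  isometry_vertical.isClosedEmbedding.measurableEmbedding

theorem measurableSet : MeasurableSet Cross :=
  (measurableSet_singleton 0).preimage measurable_snd |>.union <|
    ((measurableSet_singleton 0).preimage measurable_fst).inter
      (measurableSet_Iic.preimage measurable_snd)

theorem snd_le_one {p : ℝ × ℝ} (hp : p ∈ Cross) : p.2 ≤ 1 :=
  hp.elim (fun hp0 => hp0.le.trans zero_le_one) And.right

theorem mem_ball_iff {h c r : ℝ} {p : ℝ × ℝ} :
    p ∈ ball (h, c) r ↔ |p.1 - h| < r ∧ |p.2 - c| < r := by
  simp only [mem_ball, Prod.dist_eq, Real.dist_eq, max_lt_iff]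

theorem ball_inter_eq {h c r : ℝ} (hh : |h| < r) (hc : |c| < r) :
    ball (h, c) r ∩ Cross =
      horizontal '' Ioo (h - r) (h + r) ∪ vertical '' (Ioo (c - r) (c + r) ∩ Iic 1) := by
  ext ⟨x, y⟩
  simp only [mem_inter_iff, mem_ball_iff, Cross, mem_ofPred_eq, mem_union, mem_image,
    horizontal, vertical, Prod.mk.injEq, mem_Ioo, mem_Iic, abs_lt]
  rw [abs_lt] at hh hc
  constructor
  · rintro ⟨⟨hx, hy⟩, rfl | ⟨rfl, hy1⟩⟩
    · exact .inl ⟨x, ⟨by linarith, by linarith⟩, rfl, rfl⟩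
    · exact .inr ⟨y, ⟨⟨by linarith, by linarith⟩, hy1⟩, rfl, rfl⟩
  · rintro (⟨s, ⟨hs1, hs2⟩, rfl, rfl⟩ | ⟨t, ⟨⟨ht1, ht2⟩, ht⟩, rfl, rfl⟩)
    · exact ⟨⟨⟨by linarith, by linarith⟩, by linarith, by linarith⟩, .inl rfl⟩
    · exact ⟨⟨⟨by linarith, by linarith⟩, by linarith, by linarith⟩, .inr ⟨rfl, ht⟩⟩

theorem hausdorffMeasure_ball_inter {h c r : ℝ} (hh : |h| < r) (hc : |c| < r) :
    μH[1] (ball (h, c) r ∩ Cross) =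
      ENNReal.ofReal (2 * r) + ENNReal.ofReal (min (c + r) 1 - (c - r)) := by
  have hmeas : MeasurableSet (vertical '' (Ioo (c - r) (c + r) ∩ Iic 1)) :=
    measurableEmbedding_vertical.measurableSet_image' (measurableSet_Ioo.inter measurableSet_Iic)
  -- the two segments meet only at the origin
  have hdisj : AEDisjoint μH[1] (horizontal '' Ioo (h - r) (h + r))
      (vertical '' (Ioo (c - r) (c + r) ∩ Iic 1)) := by
    refine measure_mono_null ?_ ((isometry_vertical.hausdorffMeasure_real_image {0}).trans
      Real.volume_singleton)
    rintro _ ⟨⟨s, -, rfl⟩, ⟨t, -, hts⟩⟩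
    obtain ⟨rfl, rfl⟩ := Prod.mk.inj hts
    exact ⟨0, rfl, rfl⟩
  rw [ball_inter_eq hh hc, measure_union₀ hmeas.nullMeasurableSet hdisj,
    isometry_horizontal.hausdorffMeasure_real_image, isometry_vertical.hausdorffMeasure_real_image,
    Real.volume_Ioo, Real.volume_Ioo_inter_Iic]
  ring_nf

theorem setIntegral_ball_inter {E : Type*} [NormedAddCommGroup E] [NormedSpace ℝ E]
    {h c r : ℝ} (hh : |h| < r) (hc : |c| < r) {f : ℝ × ℝ → E} (hf : ∀ s, f (s, 0) = 0) :
    ∫ p in ball (h, c) r ∩ Cross, f p ∂μH[1] = ∫ t in Ioo (c - r) (c + r) ∩ Iic 1, f (0, t) := by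
  rw [ball_inter_eq hh hc, setIntegral_eq_of_subset_of_forall_sdiff_eq_zero
      ((measurableEmbedding_horizontal.measurableSet_image' measurableSet_Ioo).union
        (measurableEmbedding_vertical.measurableSet_image'
          (measurableSet_Ioo.inter measurableSet_Iic)))
      subset_union_right, isometry_vertical.setIntegral_image_hausdorffMeasure
      measurableEmbedding_vertical zero_le_one, hausdorffMeasure_real]
  · rfl
  · rintro _ ⟨⟨s, -, rfl⟩ | hv, hnv⟩
    · exact hf s
    · exact absurd hv hnv

theorem uCross_eq (p : Cross) : uCross p = (Ioc (0 : ℝ) 1).indicator id (p : ℝ × ℝ).2 := by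
  simp [uCross, indicator_apply]

theorem setAverage_uCross_ball_le {h c r : ℝ} (hz : (h, c) ∈ Cross) (hh : |h| < r) (hc : |c| < r) :
    ⨍ y in ball ⟨(h, c), hz⟩ r, uCross y ∂(μH[1] : Measure Cross) ≤
      min (c + r) 1 ^ 2 / 2 / (2 * r + (min (c + r) 1 - (c - r))) := by
  obtain ⟨hcr, hcr'⟩ := abs_lt.1 hc
  have hb0 : 0 ≤ min (c + r) 1 := le_min (by linarith) zero_le_one
  have hbc : c ≤ min (c + r) 1 := le_min (by linarith) (snd_le_one hz)
  have hM : 0 < 2 * r + (min (c + r) 1 - (c - r)) := by linarith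
  rw [setAverage_eq, smul_eq_mul, measureReal_def, hausdorffMeasure_subtype_ball zero_le_one,
    hausdorffMeasure_ball_inter hh hc, ← ENNReal.ofReal_add (by linarith) (by linarith),
    ENNReal.toReal_ofReal hM.le, inv_mul_eq_div]
  refine div_le_div_of_nonneg_right ?_ hM.le
  simp only [uCross_eq]
  rw [setIntegral_subtype_ball measurableSet zero_le_one ⟨(h, c), hz⟩ r
      (fun p => (Ioc (0 : ℝ) 1).indicator id p.2),
    setIntegral_ball_inter hh hc (by simp)]
  exact Real.setIntegral_indicator_Ioc_id_le hb0
    fun t ⟨⟨⟨_, ht⟩, _⟩, ht0, ht1⟩ => ⟨ht0, le_min ht.le ht1⟩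

theorem setAverage_uCross_ball_le_of_le_half {h c r : ℝ} (hz : (h, c) ∈ Cross) (hh : |h| < r)
    (hc : |c| < r) (hr : r ≤ 1 / 2) :
    ⨍ y in ball ⟨(h, c), hz⟩ r, uCross y ∂(μH[1] : Measure Cross) ≤ 1 / 4 := by
  obtain ⟨hcr, hcr'⟩ := abs_lt.1 hc
  refine (setAverage_uCross_ball_le hz hh hc).trans ?_
  rw [min_eq_left (by linarith), div_le_iff₀ (by linarith)]
  nlinarith

theorem setAverage_uCross_ball_le_of_half_lt {h c r : ℝ} (hz : (h, c) ∈ Cross) (hh : |h| < r)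
    (hc : |c| < r) (hr : 1 / 2 < r) :
    ⨍ y in ball ⟨(h, c), hz⟩ r, uCross y ∂(μH[1] : Measure Cross) ≤ 1 / (6 * r) := by
  obtain ⟨hcr, hcr'⟩ := abs_lt.1 hc
  have hb0 : 0 ≤ min (c + r) 1 := le_min (by linarith) zero_le_one
  have hbc : c ≤ min (c + r) 1 := le_min (by linarith) (snd_le_one hz)
  have hb1 : min (c + r) 1 ^ 2 ≤ 1 := pow_le_one₀ hb0 (min_le_right _ _)
  refine (setAverage_uCross_ball_le hz hh hc).trans ?_
  rw [div_le_div_iff₀ (by linarith) (by linarith)]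
  nlinarith [mul_le_mul_of_nonneg_right hb1 (show 0 ≤ r by linarith)]

end Cross

theorem Real.rpow_le_max_one_self {x α : ℝ} (hx : 0 ≤ x) (hα0 : 0 ≤ α) (hα1 : α ≤ 1) :
    x ^ α ≤ max 1 x := by
  rcases le_total x 1 with hx1 | hx1
  · exact (Real.rpow_le_one hx hx1 hα0).trans (le_max_left 1 x)
  · exact (Real.rpow_le_self_of_one_le hx1 hα1).trans (le_max_right 1 x)

/-- On the cross `X` with the 1-dimensional Hausdorff measure, for
`0 ≤ α ≤ 1` and any ball `B(z,r)` containing the origin: if `r ≤ 1/2` then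
`r^α ⨍_{B(z,r)} u dμ ≤ 1/4`, and if `r > 1/2` then `r^α ⨍_{B(z,r)} u dμ ≤ 1/3`. -/
theorem cross_ball_average_bounds
    (α : ℝ) (hα0 : 0 ≤ α) (hα1 : α ≤ 1) :
    ∀ (z : Cross) (r : ℝ), 0 < r →
      (⟨(0, 0), Or.inl rfl⟩ : Cross) ∈ ball z r →
      (r ≤ 1 / 2 →
        r ^ α * ⨍ y in ball z r, uCross y ∂(μH[1] : Measure Cross) ≤ 1 / 4) ∧
      (1 / 2 < r →
        r ^ α * ⨍ y in ball z r, uCross y ∂(μH[1] : Measure Cross) ≤ 1 / 3) := by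
  rintro ⟨⟨h, c⟩, hz⟩ r hr h0
  obtain ⟨hh, hc⟩ : |h| < r ∧ |c| < r := by simpa [abs_sub_comm] using Cross.mem_ball_iff.1 h0
  have hrα : 0 ≤ r ^ α := Real.rpow_nonneg hr.le α
  refine ⟨fun hr2 => ?_, fun hr2 => ?_⟩
  · calc r ^ α * _ ≤ r ^ α * (1 / 4) :=
          mul_le_mul_of_nonneg_left (Cross.setAverage_uCross_ball_le_of_le_half hz hh hc hr2) hrα
      _ ≤ 1 / 4 := mul_le_of_le_one_left (by norm_num) (Real.rpow_le_one hr.le (by linarith) hα0)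
  · calc r ^ α * _ ≤ r ^ α * (1 / (6 * r)) :=
          mul_le_mul_of_nonneg_left (Cross.setAverage_uCross_ball_le_of_half_lt hz hh hc hr2) hrα
      _ ≤ max 1 r * (1 / (6 * r)) :=
          mul_le_mul_of_nonneg_right (Real.rpow_le_max_one_self hr.le hα0 hα1) (by positivity)
      _ ≤ 1 / 3 := by
          rw [mul_one_div, div_le_iff₀ (by linarith)]
          exact max_le (by linarith) (by linarith)
end
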